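/- arXiv:1504.00706 — 4 statements merged into one kernel-verified Lean document; each statement's English description precedes it below -/
import Mathlib

section
/- Let q₀ ≥ 0 and δ > 0. Let φ : [0,∞) → [0,∞) be a continuous function of the form φ(t) = q₀ + ∫₀^t ξ(s) ds + l(t) for all t ≥ 0, where ξ : [0,∞) → ℝ is Borel measurable, locally integrable, and satisfies ξ(t) ≤ −δ for Lebesgue-almost every t ≥ 0, and where l : [0,∞) → ℝ is continuous, nondecreasing, l(0) = 0, and the Lebesgue–Stieltjes measure induced by l assigns zero mass to the set {t ≥ 0 : φ(t) > 0} (equivalently, ∫₀^∞ φ(t) dl(t) = 0). Then φ(t) = 0 for all t ≥ q₀/δ. -/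
/-!
On every interval where `φ` stays positive the reflection term `l` is constant, so there `φ`
decreases at rate at least `δ`. If `φ t > 0`, let `σ` be the last zero of `φ` before `t`: on
`(σ, t]` the trajectory is positive, hence `φ t ≤ φ s` for `s ∈ (σ, t]`, and continuity gives
`φ t ≤ φ σ = 0`. So `φ` has no zero on `[0, t]`, and then `φ t ≤ q₀ - δ t ≤ 0`.
-/

open MeasureTheory Set

theorem intervalIntegral_le_mul_of_ae_le {f : ℝ → ℝ} {a b c : ℝ} (hab : a ≤ b)
    (hf : IntervalIntegrable f volume a b) (hc : ∀ᵐ x ∂volume.restrict (Icc a b), f x ≤ c) :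
    ∫ x in a..b, f x ≤ (b - a) * c :=
  (intervalIntegral.integral_mono_ae_restrict hab hf intervalIntegrable_const hc).trans_eq
    (by simp)

theorem pos_on_Icc_of_le_on_positive_stretches {φ : ℝ → ℝ} {a t : ℝ}
    (hφ : ContinuousOn φ (Icc a t)) (hφ_nonneg : ∀ s ∈ Icc a t, 0 ≤ φ s)
    (hdec : ∀ s ∈ Icc a t, (∀ u ∈ Icc s t, 0 < φ u) → φ t ≤ φ s) (ht : 0 < φ t) :
    ∀ s ∈ Icc a t, 0 < φ s := by
  by_contra! h
  obtain ⟨σ, ⟨hσ, hσ_zero : φ σ = 0⟩, hσ_last⟩ :=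
    (isCompact_Icc.of_isClosed_subset (hφ.preimage_isClosed_of_isClosed isClosed_Icc
      (isClosed_singleton (x := 0))) inter_subset_left).exists_isGreatest <| by
      obtain ⟨s, hs, hφs⟩ := h
      exact ⟨s, hs, le_antisymm hφs (hφ_nonneg s hs)⟩
  have hσt : σ < t := hσ.2.lt_of_ne (by rintro rfl; exact ht.ne' hσ_zero)
  have hpos_after : ∀ s ∈ Ioc σ t, 0 < φ s := fun s hs ↦
    (hφ_nonneg s ⟨hσ.1.trans hs.1.le, hs.2⟩).lt_of_ne' fun hφs ↦
      (hσ_last ⟨⟨hσ.1.trans hs.1.le, hs.2⟩, hφs⟩).not_gt hs.1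
  -- `{s | φ t ≤ φ s}` is closed and contains `(σ, t]`, hence also `σ`.
  have hclosed : IsClosed (Icc a t ∩ φ ⁻¹' Ici (φ t)) :=
    hφ.preimage_isClosed_of_isClosed isClosed_Icc isClosed_Ici
  have hsub : Ioc σ t ⊆ Icc a t ∩ φ ⁻¹' Ici (φ t) := fun s hs ↦
    ⟨⟨hσ.1.trans hs.1.le, hs.2⟩,
      hdec s ⟨hσ.1.trans hs.1.le, hs.2⟩ fun u hu ↦ hpos_after u ⟨hs.1.trans_le hu.1, hu.2⟩⟩
  have : φ t ≤ φ σ :=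
    (closure_minimal hsub hclosed (by rw [closure_Ioc hσt.ne]; exact ⟨le_rfl, hσt.le⟩)).2
  linarith

section ReflectedTrajectory

variable {q₀ δ : ℝ} {φ ξ l : ℝ → ℝ}

theorem intervalIntegrable_of_integrableOn_Icc (hξ_loc : ∀ T : ℝ, IntegrableOn ξ (Icc 0 T))
    {a b : ℝ} (ha : 0 ≤ a) (hab : a ≤ b) : IntervalIntegrable ξ volume a b :=
  (intervalIntegrable_iff_integrableOn_Icc_of_le hab).2
    ((hξ_loc b).mono_set (Icc_subset_Icc_left ha))

theorem sub_le_neg_mul_of_pos_on_Icc (hξ_loc : ∀ T : ℝ, IntegrableOn ξ (Icc 0 T))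
    (hξ_bound : ∀ᵐ t ∂(volume.restrict (Ici (0:ℝ))), ξ t ≤ -δ)
    (heq : ∀ t, 0 ≤ t → φ t = q₀ + (∫ s in Ioc (0:ℝ) t, ξ s) + l t)
    (hflat : ∀ a b, 0 ≤ a → a ≤ b → (∀ t ∈ Icc a b, 0 < φ t) → l a = l b)
    {a b : ℝ} (ha : 0 ≤ a) (hab : a ≤ b) (hpos : ∀ t ∈ Icc a b, 0 < φ t) :
    φ b - φ a ≤ -δ * (b - a) := by
  have hφ_eq : φ b - φ a = (∫ s in a..b, ξ s) + (l b - l a) := by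
    rw [heq b (ha.trans hab), heq a ha, ← intervalIntegral.integral_of_le (ha.trans hab),
      ← intervalIntegral.integral_of_le ha,
      ← intervalIntegral.integral_interval_sub_left
        (intervalIntegrable_of_integrableOn_Icc hξ_loc le_rfl (ha.trans hab))
        (intervalIntegrable_of_integrableOn_Icc hξ_loc le_rfl ha)]
    ring
  have hdrift : ∫ s in a..b, ξ s ≤ (b - a) * -δ :=
    intervalIntegral_le_mul_of_ae_le hab (intervalIntegrable_of_integrableOn_Icc hξ_loc ha hab)
      (ae_restrict_of_ae_restrict_of_subset (fun _ hs ↦ ha.trans hs.1) hξ_bound)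
  rw [hφ_eq, hflat a b ha hab hpos]
  linarith

end ReflectedTrajectory

theorem reflected_trajectory_absorbed_general (q₀ δ : ℝ) (φ ξ l : ℝ → ℝ)
    (hq₀ : 0 ≤ q₀) (hδ : 0 < δ)
    (hφ_cont : ContinuousOn φ (Set.Ici 0))
    (hφ_nonneg : ∀ t, 0 ≤ t → 0 ≤ φ t)
    (hξ_loc : ∀ T : ℝ, IntegrableOn ξ (Set.Icc 0 T))
    (hξ_bound : ∀ᵐ t ∂(volume.restrict (Set.Ici (0:ℝ))), ξ t ≤ -δ)
    (hl_zero : l 0 = 0)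
    (heq : ∀ t, 0 ≤ t → φ t = q₀ + (∫ s in Set.Ioc (0:ℝ) t, ξ s) + l t)
    (hflat : ∀ a b, 0 ≤ a → a ≤ b → (∀ t ∈ Set.Icc a b, 0 < φ t) → l a = l b) :
    ∀ t, q₀ / δ ≤ t → φ t = 0 := by
  intro t ht
  have ht₀ : 0 ≤ t := (div_nonneg hq₀ hδ.le).trans ht
  have hq₀t : q₀ ≤ δ * t := by rwa [div_le_iff₀' hδ] at ht
  have hdec := @sub_le_neg_mul_of_pos_on_Icc _ _ _ _ _ hξ_loc hξ_bound heq hflat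
  by_contra hne
  have hpos : ∀ s ∈ Icc 0 t, 0 < φ s := by
    refine pos_on_Icc_of_le_on_positive_stretches (hφ_cont.mono Icc_subset_Ici_self)
      (fun s hs ↦ hφ_nonneg s hs.1) (fun s hs hpos ↦ ?_)
      ((hφ_nonneg t ht₀).lt_of_ne' hne)
    linarith [hdec hs.1 hs.2 hpos, mul_nonneg hδ.le (sub_nonneg.2 hs.2)]
  have hφ₀ : φ 0 = q₀ := by simp [heq 0 le_rfl, hl_zero]
  have := hdec le_rfl ht₀ hpos
  linarith [hpos t ⟨ht₀, le_rfl⟩]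

/-- one-dimensional hitting-time bound for reflected trajectories with
drift bounded above by `-δ`: the trajectory `φ(t) = q₀ + ∫₀^t ξ(s) ds + l(t)` is
absorbed at `0` from time `q₀/δ` on. -/
theorem reflected_trajectory_absorbed (q₀ δ : ℝ) (φ ξ l : ℝ → ℝ)
    (hq₀ : 0 ≤ q₀) (hδ : 0 < δ)
    (hφ_cont : ContinuousOn φ (Set.Ici 0))
    (hφ_nonneg : ∀ t, 0 ≤ t → 0 ≤ φ t)
    (hξ_meas : Measurable ξ)
    (hξ_loc : ∀ T : ℝ, IntegrableOn ξ (Set.Icc 0 T))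
    (hξ_bound : ∀ᵐ t ∂(volume.restrict (Set.Ici (0:ℝ))), ξ t ≤ -δ)
    (hl_cont : ContinuousOn l (Set.Ici 0))
    (hl_mono : MonotoneOn l (Set.Ici 0))
    (hl_zero : l 0 = 0)
    (heq : ∀ t, 0 ≤ t → φ t = q₀ + (∫ s in Set.Ioc (0:ℝ) t, ξ s) + l t)
    (hflat : ∀ a b, 0 ≤ a → a ≤ b → (∀ t ∈ Set.Icc a b, 0 < φ t) → l a = l b) :
    ∀ t, q₀ / δ ≤ t → φ t = 0 :=
  reflected_trajectory_absorbed_general q₀ δ φ ξ l hq₀ hδ hφ_cont hφ_nonneg hξ_loc hξ_bound hl_zero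
    heq hflat
end

section
/- Let h : [0,∞) → [0,∞) be Borel measurable and locally integrable, and let δ > 0 and b ∈ ℝ satisfy b − ∫₀^z h(u) du ≤ −δ for all z ≥ 0. Fix x ≥ 0 and let (z, l) be a solution of the one-sided nonlinear generalized regulator problem with hazard function h and input y(t) = x + b t. Then z(t) = 0 for all t ≥ x/δ. -/
/-- A pair `(z, l)` of continuous functions on `[0,∞)` solves the one-sided nonlinear
generalized regulator problem with hazard function `h` and input `y`:
(a) `z(t) = y(t) - ∫₀^t (∫₀^{z(s)} h(u) du) ds + l(t) ≥ 0` for all `t ≥ 0`;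
(b) `l` is nondecreasing, `l(0) = 0`, and `l` increases only at times where `z = 0`
(equivalently, `∫₀^∞ z(t) dl(t) = 0`). -/
structure IsRegulatorSolution (h y z l : ℝ → ℝ) : Prop where
  z_cont : ContinuousOn z (Set.Ici 0)
  l_cont : ContinuousOn l (Set.Ici 0)
  z_nonneg : ∀ t, 0 ≤ t → 0 ≤ z t
  eqn : ∀ t, 0 ≤ t →
    z t = y t - (∫ s in Set.Ioc (0:ℝ) t, ∫ u in Set.Ioc (0:ℝ) (z s), h u) + l t
  l_mono : MonotoneOn l (Set.Ici 0)
  l_zero : l 0 = 0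
  l_flat : ∀ a b, 0 ≤ a → a ≤ b → (∀ t ∈ Set.Icc a b, 0 < z t) → l a = l b

/-! On an interval `(a, t]` on which `z > 0` the regulator `l` does not move, so there `z`
decreases at rate at least `δ`: `z t ≤ z a - δ (t - a)`. Starting from the last zero of `z`
before `t`, or from time `0` where `z 0 = x`, this forces `z t ≤ 0` once `δ t ≥ x`. -/

open MeasureTheory Set Topology

noncomputable def cumulativeHazard (h : ℝ → ℝ) (w : ℝ) : ℝ :=
  ∫ u in Ioc 0 w, h u

theorem continuousOn_cumulativeHazard {h : ℝ → ℝ}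
    (h_loc : ∀ T : ℝ, IntegrableOn h (Icc 0 T)) :
    ContinuousOn (cumulativeHazard h) (Ici 0) := by
  intro w hw
  have hIcc : Icc 0 (w + 1) ∈ 𝓝[Ici 0] w :=
    inter_mem_nhdsWithin _ (Iic_mem_nhds (lt_add_one w))
  exact ((intervalIntegral.continuousOn_primitive (h_loc (w + 1))) w
    ⟨hw, (lt_add_one w).le⟩).mono_of_mem_nhdsWithin hIcc

theorem exists_mem_Icc_eq_left_or_eq_zero_forall_ne_zero {f : ℝ → ℝ} {a t : ℝ}
    (hat : a ≤ t) (hf : ContinuousOn f (Icc a t)) :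
    ∃ c ∈ Icc a t, (c = a ∨ f c = 0) ∧ ∀ s ∈ Ioc c t, f s ≠ 0 := by
  set S := {a} ∪ (Icc a t ∩ f ⁻¹' {0})
  have hS : IsClosed S :=
    isClosed_singleton.union (hf.preimage_isClosed_of_isClosed isClosed_Icc isClosed_singleton)
  have hSt : S ⊆ Icc a t := union_subset (singleton_subset_iff.2 ⟨le_rfl, hat⟩) inter_subset_left
  have hc := hS.csSup_mem (singleton_nonempty a).inl (bddAbove_Icc.mono hSt)
  refine ⟨sSup S, hSt hc, hc.imp id (·.2), fun s hs hfs => ?_⟩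
  have hsS : s ∈ S := Or.inr ⟨⟨(hSt hc).1.trans hs.1.le, hs.2⟩, hfs⟩
  exact hs.1.not_ge (le_csSup (bddAbove_Icc.mono hSt) hsS)

namespace IsRegulatorSolution

variable {h y z l : ℝ → ℝ}

theorem apply_zero (hsol : IsRegulatorSolution h y z l) : z 0 = y 0 := by
  simpa [hsol.l_zero] using hsol.eqn 0 le_rfl

theorem l_eq_of_forall_pos (hsol : IsRegulatorSolution h y z l) {a t : ℝ}
    (ha : 0 ≤ a) (hat : a ≤ t) (hpos : ∀ s ∈ Ioc a t, 0 < z s) : l a = l t := by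
  rcases hat.eq_or_lt with rfl | hat
  · rfl
  have hflat : MapsTo l (Ioc a t) {l t} := fun u hu =>
    hsol.l_flat u t (ha.trans hu.1.le) hu.2 fun s hs => hpos s ⟨hu.1.trans_le hs.1, hs.2⟩
  have hcont : ContinuousWithinAt l (Ioc a t) a :=
    (hsol.l_cont a ha).mono fun u hu => ha.trans hu.1.le
  simpa using hcont.mem_closure (by simp [closure_Ioc hat.ne, hat.le]) hflat

theorem integrableOn_cumulativeHazard_comp (hsol : IsRegulatorSolution h y z l)
    (h_loc : ∀ T : ℝ, IntegrableOn h (Icc 0 T)) (T : ℝ) :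
    IntegrableOn (fun s => cumulativeHazard h (z s)) (Icc 0 T) :=
  ((continuousOn_cumulativeHazard h_loc).comp (hsol.z_cont.mono Icc_subset_Ici_self)
    fun s hs => hsol.z_nonneg s hs.1).integrableOn_Icc

theorem sub_eq_of_forall_pos (hsol : IsRegulatorSolution h y z l)
    (h_loc : ∀ T : ℝ, IntegrableOn h (Icc 0 T)) {a t : ℝ}
    (ha : 0 ≤ a) (hat : a ≤ t) (hpos : ∀ s ∈ Ioc a t, 0 < z s) :
    z t - z a = y t - y a - ∫ s in Ioc a t, cumulativeHazard h (z s) := by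
  have hint := hsol.integrableOn_cumulativeHazard_comp h_loc t
  have hsplit : ∫ s in Ioc 0 t, cumulativeHazard h (z s)
      = (∫ s in Ioc 0 a, cumulativeHazard h (z s)) + ∫ s in Ioc a t, cumulativeHazard h (z s) := by
    rw [← setIntegral_union (Ioc_disjoint_Ioc_of_le le_rfl) measurableSet_Ioc
      (hint.mono_set (Ioc_subset_Icc_self.trans (Icc_subset_Icc_right hat)))
      (hint.mono_set (Ioc_subset_Icc_self.trans (Icc_subset_Icc_left ha))),
      Ioc_union_Ioc_eq_Ioc ha hat]
  have eq_t : z t = y t - (∫ s in Ioc 0 t, cumulativeHazard h (z s)) + l t :=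
    hsol.eqn t (ha.trans hat)
  have eq_a : z a = y a - (∫ s in Ioc 0 a, cumulativeHazard h (z s)) + l a :=
    hsol.eqn a ha
  linarith [hsol.l_eq_of_forall_pos ha hat hpos]

theorem le_sub_mul_of_forall_pos {x b δ : ℝ}
    (hsol : IsRegulatorSolution h (fun t => x + b * t) z l)
    (h_loc : ∀ T : ℝ, IntegrableOn h (Icc 0 T))
    (hdrift : ∀ w, 0 ≤ w → b - cumulativeHazard h w ≤ -δ) {a t : ℝ}
    (ha : 0 ≤ a) (hat : a ≤ t) (hpos : ∀ s ∈ Ioc a t, 0 < z s) :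
    z t ≤ z a - δ * (t - a) := by
  have hlower : ∫ s in Ioc a t, (b + δ) ≤ ∫ s in Ioc a t, cumulativeHazard h (z s) :=
    setIntegral_mono_on (integrableOn_const (by simp))
      ((hsol.integrableOn_cumulativeHazard_comp h_loc t).mono_set
        (Ioc_subset_Icc_self.trans (Icc_subset_Icc_left ha))) measurableSet_Ioc
      fun s hs => by linarith [hdrift (z s) (hsol.z_nonneg s (ha.trans hs.1.le))]
  rw [setIntegral_const, Real.volume_real_Ioc_of_le hat, smul_eq_mul] at hlower
  have := hsol.sub_eq_of_forall_pos h_loc ha hat hpos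
  linarith

end IsRegulatorSolution

theorem regulator_linear_input_absorbed_general (h : ℝ → ℝ) (δ b x : ℝ) (z l : ℝ → ℝ)
    (h_loc : ∀ T : ℝ, MeasureTheory.IntegrableOn h (Set.Icc 0 T))
    (hδ : 0 < δ)
    (hdrift : ∀ w, 0 ≤ w → (b - ∫ u in Set.Ioc (0:ℝ) w, h u) ≤ -δ)
    (hsol : IsRegulatorSolution h (fun t => x + b * t) z l) :
    ∀ t, x / δ ≤ t → z t = 0 := by
  intro t ht
  have hz0 : z 0 = x := by simpa using hsol.apply_zero
  have ht0 : 0 ≤ t := (div_nonneg (hz0 ▸ hsol.z_nonneg 0 le_rfl) hδ.le).trans ht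
  have hδt : x ≤ δ * t := by rwa [div_le_iff₀' hδ] at ht
  obtain ⟨c, hc, hc_zero, hc_pos⟩ := exists_mem_Icc_eq_left_or_eq_zero_forall_ne_zero ht0
    (hsol.z_cont.mono Icc_subset_Ici_self)
  have hdecay := hsol.le_sub_mul_of_forall_pos h_loc hdrift hc.1 hc.2 fun s hs =>
    (hsol.z_nonneg s (hc.1.trans hs.1.le)).lt_of_ne' (hc_pos s hs)
  refine le_antisymm ?_ (hsol.z_nonneg t ht0)
  rcases hc_zero with rfl | hzc
  · linarith
  · nlinarith [hc.2]

/-- if the state-dependent drift `b - ∫₀^z h(u) du` is bounded above by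
`-δ < 0` uniformly in `z ≥ 0`, then the regulated trajectory with linear input
`y(t) = x + b t` is absorbed at zero by time `x/δ`. -/
theorem regulator_linear_input_absorbed (h : ℝ → ℝ) (δ b x : ℝ) (z l : ℝ → ℝ)
    (h_meas : Measurable h)
    (h_nonneg : ∀ u, 0 ≤ u → 0 ≤ h u)
    (h_loc : ∀ T : ℝ, MeasureTheory.IntegrableOn h (Set.Icc 0 T))
    (hδ : 0 < δ)
    (hdrift : ∀ w, 0 ≤ w → (b - ∫ u in Set.Ioc (0:ℝ) w, h u) ≤ -δ)
    (hx : 0 ≤ x)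
    (hsol : IsRegulatorSolution h (fun t => x + b * t) z l) :
    ∀ t, x / δ ≤ t → z t = 0 :=
  regulator_linear_input_absorbed_general h δ b x z l h_loc hδ hdrift hsol
end

section
/- Let h : [0,∞) → [0,∞) be Borel measurable and locally integrable. There exists a constant κ > 0 such that for any two continuous inputs y₁, y₂ : [0,∞) → ℝ with y₁(0) ≥ 0 and y₂(0) ≥ 0, any solutions (z₁, l₁) and (z₂, l₂) of the one-sided nonlinear generalized regulator problem for inputs y₁ and y₂ respectively, and every T ≥ 0: sup_{0 ≤ t ≤ T} |z₁(t) − z₂(t)| ≤ κ · sup_{0 ≤ t ≤ T} |y₁(t) − y₂(t)|. -/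
/-!
On a maximal interval `(σ, t]` where `z₁ > z₂ ≥ 0`, the regulator `l₁` cannot increase while
`l₂` can only push `z₂` up, and since `h ≥ 0` the drift `∫₀^{z} h` is larger along `z₁`. Hence
`z₁ - z₂` grows on `(σ, t]` by at most the increment of `y₁ - y₂`, while at the left end `σ`
either `z₁ ≤ z₂` or `σ = 0`, where `z = y`. This gives `z₁ t - z₂ t ≤ 2 sup |y₁ - y₂|`, and `κ = 2`
by symmetry.
-/

open Set MeasureTheory

lemma exists_forall_pos_Ioc {f : ℝ → ℝ} {a t : ℝ} (hat : a ≤ t) (hf : ContinuousOn f (Icc a t)) :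
    ∃ σ ∈ Icc a t, (σ = a ∨ f σ ≤ 0) ∧ ∀ s ∈ Ioc σ t, 0 < f s := by
  set S : Set ℝ := {a} ∪ {s ∈ Icc a t | f s ≤ 0}
  have hS_sub : S ⊆ Icc a t := union_subset (singleton_subset_iff.2 ⟨le_rfl, hat⟩) (sep_subset _ _)
  have hS_closed : IsClosed S :=
    isClosed_singleton.union (hf.preimage_isClosed_of_isClosed isClosed_Icc isClosed_Iic)
  have hS_bdd : BddAbove S := bddAbove_Icc.mono hS_sub
  have hS_ne : S.Nonempty := ⟨a, .inl rfl⟩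
  have hσS : sSup S ∈ S := hS_closed.csSup_mem hS_ne hS_bdd
  refine ⟨sSup S, hS_sub hσS, hσS.imp id And.right, fun s hs => ?_⟩
  by_contra! hfs
  have ha : a ≤ s := (le_csSup hS_bdd (.inl rfl)).trans hs.1.le
  exact hs.1.not_ge (le_csSup hS_bdd (.inr ⟨⟨ha, hs.2⟩, hfs⟩))

lemma setIntegral_Ioc_zero_mono {h : ℝ → ℝ} (h_nonneg : ∀ u, 0 ≤ u → 0 ≤ h u) {a b : ℝ}
    (hb : IntegrableOn h (Ioc 0 b)) (hab : a ≤ b) :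
    ∫ u in Ioc 0 a, h u ≤ ∫ u in Ioc 0 b, h u :=
  setIntegral_mono_set hb
    (ae_restrict_of_forall_mem measurableSet_Ioc fun u hu => h_nonneg u hu.1.le)
    (Ioc_subset_Ioc_right hab).eventuallyLE

lemma continuousOn_setIntegral_Ioc_zero_comp {h z : ℝ → ℝ}
    (h_loc : ∀ T : ℝ, IntegrableOn h (Icc 0 T)) {s : Set ℝ} (hs : IsCompact s)
    (hz : ContinuousOn z s) (hz0 : ∀ x ∈ s, 0 ≤ z x) :
    ContinuousOn (fun x => ∫ u in Ioc 0 (z x), h u) s := by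
  obtain ⟨B, hB⟩ := hs.bddAbove_image hz
  exact (intervalIntegral.continuousOn_primitive (h_loc B)).comp hz
    fun x hx => ⟨hz0 x hx, hB (mem_image_of_mem z hx)⟩

namespace IsRegulatorSolution

variable {h y z l : ℝ → ℝ}

lemma integrableOn_drift (sol : IsRegulatorSolution h y z l)
    (h_loc : ∀ T : ℝ, IntegrableOn h (Icc 0 T)) (t : ℝ) :
    IntegrableOn (fun s => ∫ u in Ioc 0 (z s), h u) (Icc 0 t) :=
  (continuousOn_setIntegral_Ioc_zero_comp h_loc isCompact_Icc
    (sol.z_cont.mono Icc_subset_Ici_self) fun s hs => sol.z_nonneg s hs.1).integrableOn_Icc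

lemma eq_at_zero (sol : IsRegulatorSolution h y z l) : z 0 = y 0 := by
  simpa [sol.l_zero] using sol.eqn 0 le_rfl

lemma sub_eq_of_le (sol : IsRegulatorSolution h y z l) (h_loc : ∀ T : ℝ, IntegrableOn h (Icc 0 T))
    {σ t : ℝ} (hσ : 0 ≤ σ) (hσt : σ ≤ t) :
    z t - z σ = y t - y σ - (∫ s in Ioc σ t, ∫ u in Ioc 0 (z s), h u) + (l t - l σ) := by
  have hint := sol.integrableOn_drift h_loc t
  have hsplit := setIntegral_union (Ioc_disjoint_Ioc_of_le le_rfl) measurableSet_Ioc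
    (hint.mono_set fun s hs => ⟨hs.1.le, hs.2.trans hσt⟩)
    (hint.mono_set fun s hs => ⟨hσ.trans hs.1.le, hs.2⟩)
  rw [Ioc_union_Ioc_eq_Ioc hσ hσt] at hsplit
  rw [sol.eqn t (hσ.trans hσt), sol.eqn σ hσ, hsplit]
  ring

/-- `l_flat` needs `z > 0` on a closed interval; continuity of `l` extends it to `(σ, t]`. -/
lemma l_eq_of_forall_pos_Ioc (sol : IsRegulatorSolution h y z l) {σ t : ℝ} (hσ : 0 ≤ σ)
    (hσt : σ ≤ t) (hpos : ∀ s ∈ Ioc σ t, 0 < z s) : l σ = l t := by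
  rcases hσt.eq_or_lt with rfl | hlt
  · rfl
  have hflat : EqOn l (fun _ => l t) (Ioc σ t) := fun s hs =>
    sol.l_flat s t (hσ.trans hs.1.le) hs.2 fun u hu => hpos u ⟨hs.1.trans_le hu.1, hu.2⟩
  refine hflat.of_subset_closure (sol.l_cont.mono fun u hu => hσ.trans hu.1)
    continuousOn_const Ioc_subset_Icc_self (closure_Ioc hlt.ne).ge ⟨le_rfl, hlt.le⟩

variable {y₁ y₂ z₁ l₁ z₂ l₂ : ℝ → ℝ}

lemma sub_le_two_mul (sol₁ : IsRegulatorSolution h y₁ z₁ l₁)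
    (sol₂ : IsRegulatorSolution h y₂ z₂ l₂) (h_nonneg : ∀ u, 0 ≤ u → 0 ≤ h u)
    (h_loc : ∀ T : ℝ, IntegrableOn h (Icc 0 T)) {t M : ℝ} (ht : 0 ≤ t)
    (hM : ∀ s ∈ Icc 0 t, |y₁ s - y₂ s| ≤ M) :
    z₁ t - z₂ t ≤ 2 * M := by
  obtain ⟨σ, ⟨hσ, hσt⟩, hstart, hgt⟩ := exists_forall_pos_Ioc ht
    ((sol₁.z_cont.sub sol₂.z_cont).mono Icc_subset_Ici_self)
  replace hgt : ∀ s ∈ Ioc σ t, z₂ s < z₁ s := fun s hs => sub_pos.1 (hgt s hs)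
  have hl₁ : l₁ σ = l₁ t := sol₁.l_eq_of_forall_pos_Ioc hσ hσt fun s hs =>
    (sol₂.z_nonneg s (hσ.trans hs.1.le)).trans_lt (hgt s hs)
  have hl₂ : l₂ σ ≤ l₂ t := sol₂.l_mono hσ (hσ.trans hσt) hσt
  have hdrift : (∫ s in Ioc σ t, ∫ u in Ioc 0 (z₂ s), h u)
      ≤ ∫ s in Ioc σ t, ∫ u in Ioc 0 (z₁ s), h u := by
    have hsub : Ioc σ t ⊆ Icc 0 t := fun s hs => ⟨hσ.trans hs.1.le, hs.2⟩
    refine setIntegral_mono_on ((sol₂.integrableOn_drift h_loc t).mono_set hsub)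
      ((sol₁.integrableOn_drift h_loc t).mono_set hsub) measurableSet_Ioc fun s hs => ?_
    exact setIntegral_Ioc_zero_mono h_nonneg ((h_loc (z₁ s)).mono_set Ioc_subset_Icc_self)
      (hgt s hs).le
  have hstart' : z₁ σ - z₂ σ ≤ y₁ σ - y₂ σ + |y₁ σ - y₂ σ| := by
    rcases hstart with rfl | hle
    · rw [sol₁.eq_at_zero, sol₂.eq_at_zero]
      linarith [abs_nonneg (y₁ 0 - y₂ 0)]
    · linarith [neg_abs_le (y₁ σ - y₂ σ), sub_nonpos.1 hle]
  have hMσ := hM σ ⟨hσ, hσt⟩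
  have hMt := (abs_le.1 (hM t ⟨ht, le_rfl⟩)).2
  linarith [sol₁.sub_eq_of_le h_loc hσ hσt, sol₂.sub_eq_of_le h_loc hσ hσt]

lemma abs_sub_le_two_mul (sol₁ : IsRegulatorSolution h y₁ z₁ l₁)
    (sol₂ : IsRegulatorSolution h y₂ z₂ l₂) (h_nonneg : ∀ u, 0 ≤ u → 0 ≤ h u)
    (h_loc : ∀ T : ℝ, IntegrableOn h (Icc 0 T)) {t M : ℝ} (ht : 0 ≤ t)
    (hM : ∀ s ∈ Icc 0 t, |y₁ s - y₂ s| ≤ M) :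
    |z₁ t - z₂ t| ≤ 2 * M :=
  abs_sub_le_iff.2 ⟨sol₁.sub_le_two_mul sol₂ h_nonneg h_loc ht hM,
    sol₂.sub_le_two_mul sol₁ h_nonneg h_loc ht fun s hs => abs_sub_comm (y₂ s) _ ▸ hM s hs⟩

end IsRegulatorSolution

theorem regulator_lipschitz_general (h : ℝ → ℝ)
    (h_nonneg : ∀ u, 0 ≤ u → 0 ≤ h u)
    (h_loc : ∀ T : ℝ, MeasureTheory.IntegrableOn h (Set.Icc 0 T)) :
    ∃ κ > (0:ℝ), ∀ y₁ y₂ z₁ l₁ z₂ l₂ : ℝ → ℝ,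
      ContinuousOn y₁ (Set.Ici 0) → ContinuousOn y₂ (Set.Ici 0) →
      0 ≤ y₁ 0 → 0 ≤ y₂ 0 →
      IsRegulatorSolution h y₁ z₁ l₁ → IsRegulatorSolution h y₂ z₂ l₂ →
      ∀ T, 0 ≤ T → ∀ t ∈ Set.Icc (0:ℝ) T,
        |z₁ t - z₂ t| ≤ κ * sSup ((fun s => |y₁ s - y₂ s|) '' Set.Icc (0:ℝ) T) := by
  refine ⟨2, two_pos, fun y₁ y₂ z₁ l₁ z₂ l₂ hy₁ hy₂ _ _ sol₁ sol₂ T _ t ht => ?_⟩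
  have hbdd : BddAbove ((fun s => |y₁ s - y₂ s|) '' Icc 0 T) :=
    isCompact_Icc.bddAbove_image ((hy₁.sub hy₂).abs.mono Icc_subset_Ici_self)
  exact sol₁.abs_sub_le_two_mul sol₂ h_nonneg h_loc ht.1 fun s hs =>
    le_csSup hbdd (mem_image_of_mem _ ⟨hs.1, hs.2.trans ht.2⟩)

/-- Lipschitz continuity (z-component) of the one-sided nonlinear
generalized regulator map: `sup_{[0,T]} |z₁ - z₂| ≤ κ · sup_{[0,T]} |y₁ - y₂|`. -/
theorem regulator_lipschitz (h : ℝ → ℝ)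
    (h_meas : Measurable h)
    (h_nonneg : ∀ u, 0 ≤ u → 0 ≤ h u)
    (h_loc : ∀ T : ℝ, MeasureTheory.IntegrableOn h (Set.Icc 0 T)) :
    ∃ κ > (0:ℝ), ∀ y₁ y₂ z₁ l₁ z₂ l₂ : ℝ → ℝ,
      ContinuousOn y₁ (Set.Ici 0) → ContinuousOn y₂ (Set.Ici 0) →
      0 ≤ y₁ 0 → 0 ≤ y₂ 0 →
      IsRegulatorSolution h y₁ z₁ l₁ → IsRegulatorSolution h y₂ z₂ l₂ →
      ∀ T, 0 ≤ T → ∀ t ∈ Set.Icc (0:ℝ) T,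
        |z₁ t - z₂ t| ≤ κ * sSup ((fun s => |y₁ s - y₂ s|) '' Set.Icc (0:ℝ) T) :=
  regulator_lipschitz_general h h_nonneg h_loc
end

section
/- Let h : [0,∞) → [0,∞) be continuous and let y : [0,∞) → ℝ be continuous with y(0) ≥ 0. Then there exists exactly one pair (z, l) of continuous functions on [0,∞) solving the one-sided nonlinear generalized regulator problem with hazard function h and input y. -/
open Set MeasureTheory

noncomputable section

def runningSup (f : ℝ → ℝ) (t : ℝ) : ℝ := sSup (f '' Icc 0 t)

section RunningSup

variable {f g : ℝ → ℝ} {s t T c : ℝ}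

theorem le_runningSup (hf : ContinuousOn f (Icc 0 t)) (hs : s ∈ Icc 0 t) :
    f s ≤ runningSup f t :=
  le_csSup (isCompact_Icc.bddAbove_image hf) (mem_image_of_mem f hs)

theorem runningSup_le (ht : 0 ≤ t) (h : ∀ s ∈ Icc 0 t, f s ≤ c) : runningSup f t ≤ c :=
  csSup_le ((nonempty_Icc.2 ht).image f) (forall_mem_image.2 h)

theorem runningSup_mono (hf : ContinuousOn f (Icc 0 t)) (hs : 0 ≤ s) (hst : s ≤ t) :
    runningSup f s ≤ runningSup f t :=
  runningSup_le hs fun _ hu => le_runningSup hf ⟨hu.1, hu.2.trans hst⟩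

theorem runningSup_zero : runningSup f 0 = f 0 := by
  simp [runningSup]

theorem exists_eq_runningSup (hf : ContinuousOn f (Icc 0 t)) (ht : 0 ≤ t) :
    ∃ s ∈ Icc 0 t, f s = runningSup f t :=
  (isCompact_Icc.image_of_continuousOn hf).sSup_mem ((nonempty_Icc.2 ht).image f)

theorem runningSup_congr (h : EqOn f g (Icc 0 t)) : runningSup f t = runningSup g t := by
  rw [runningSup, runningSup, h.image_eq]

theorem abs_runningSup_sub_le (hf : ContinuousOn f (Icc 0 t)) (hg : ContinuousOn g (Icc 0 t))
    (ht : 0 ≤ t) (hc : ∀ s ∈ Icc 0 t, |f s - g s| ≤ c) :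
    |runningSup f t - runningSup g t| ≤ c := by
  rw [abs_sub_le_iff, sub_le_iff_le_add, sub_le_iff_le_add]
  constructor <;> refine runningSup_le ht fun s hs => ?_
  · linarith [(abs_sub_le_iff.1 (hc s hs)).1, le_runningSup hg hs]
  · linarith [(abs_sub_le_iff.1 (hc s hs)).2, le_runningSup hf hs]

/-- Rescaling `Icc 0 t` to `Icc 0 1` turns `runningSup` into a supremum over a fixed compact set
of a jointly continuous function. -/
theorem continuousOn_runningSup (hf : ContinuousOn f (Icc 0 T)) :
    ContinuousOn (runningSup f) (Icc 0 T) := by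
  rcases lt_or_ge T 0 with hT | hT
  · simp [Icc_eq_empty_of_lt hT]
  set F : ℝ → ℝ → ℝ := fun t s => f (projIcc 0 T hT (t * s))
  have hF : Continuous ↿F :=
    (hf.comp_continuous (continuous_subtype_val.comp continuous_projIcc) fun v =>
      (projIcc 0 T hT v).2).comp (continuous_fst.mul continuous_snd)
  refine ((isCompact_Icc (a := (0:ℝ)) (b := 1)).continuous_sSup hF).continuousOn.congr
    fun t ht => ?_
  have hproj : EqOn (fun v => f (projIcc 0 T hT v)) f (Icc 0 t) := fun v hv => by
    simp only [projIcc_of_mem hT ⟨hv.1, hv.2.trans ht.2⟩]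
  change sSup (f '' Icc 0 t) = sSup ((fun v => f (projIcc 0 T hT v)) ∘ (t * ·) '' Icc 0 1)
  rw [image_comp, image_mul_left_Icc ht.1 zero_le_one, mul_zero, mul_one, hproj.image_eq]

theorem continuousOn_Ici_of_forall_Icc (h : ∀ T, 0 ≤ T → ContinuousOn f (Icc 0 T)) :
    ContinuousOn f (Ici 0) :=
  continuousOn_of_locally_continuousOn fun t ht =>
    ⟨Iio (t + 1), isOpen_Iio, by simp, (h (t + 1) (by simp at ht; linarith)).mono
      fun _ hs => ⟨hs.1, hs.2.le⟩⟩

theorem ContinuousWithinAt.eq_of_forall_Ioc {f : ℝ → ℝ} {s : Set ℝ} {a b : ℝ}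
    (hf : ContinuousWithinAt f s a) (hab : a < b) (hs : Ioc a b ⊆ s)
    (h : ∀ u ∈ Ioc a b, f u = c) : f a = c := by
  have hmem := (hf.mono hs).mem_closure_image <| by
    rw [closure_Ioc hab.ne]; exact ⟨le_rfl, hab.le⟩
  have himage : f '' Ioc a b ⊆ {c} := image_subset_iff.2 h
  simpa using closure_mono himage hmem

end RunningSup

structure IsSkorokhodSolution (T : ℝ) (x z l : ℝ → ℝ) : Prop where
  z_nonneg : ∀ t ∈ Icc 0 T, 0 ≤ z t
  eq_add : ∀ t ∈ Icc 0 T, z t = x t + l t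
  l_cont : ContinuousOn l (Icc 0 T)
  l_mono : MonotoneOn l (Icc 0 T)
  l_zero : l 0 = 0
  l_flat : ∀ a b, 0 ≤ a → a ≤ b → b ≤ T → (∀ t ∈ Icc a b, 0 < z t) → l a = l b

def skorokhodReg (x : ℝ → ℝ) : ℝ → ℝ := runningSup fun s => (x s)⁻

def skorokhodMap (x : ℝ → ℝ) (t : ℝ) : ℝ := x t + skorokhodReg x t

section Skorokhod

variable {x x' z z' l l' : ℝ → ℝ} {T t c : ℝ}

theorem continuousOn_skorokhodReg (hx : ContinuousOn x (Icc 0 T)) :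
    ContinuousOn (skorokhodReg x) (Icc 0 T) :=
  continuousOn_runningSup (hx.neg.sup continuousOn_const)

theorem continuousOn_skorokhodMap (hx : ContinuousOn x (Icc 0 T)) :
    ContinuousOn (skorokhodMap x) (Icc 0 T) :=
  hx.add (continuousOn_skorokhodReg hx)

theorem skorokhodMap_congr (h : EqOn x x' (Icc 0 t)) (ht : 0 ≤ t) :
    skorokhodMap x t = skorokhodMap x' t := by
  rw [skorokhodMap, skorokhodMap, skorokhodReg, skorokhodReg,
    runningSup_congr fun s hs => congrArg negPart (h hs), h ⟨ht, le_rfl⟩]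

theorem abs_skorokhodMap_sub_le (hx : ContinuousOn x (Icc 0 t)) (hx' : ContinuousOn x' (Icc 0 t))
    (ht : 0 ≤ t) (hc : ∀ s ∈ Icc 0 t, |x s - x' s| ≤ c) :
    |skorokhodMap x t - skorokhodMap x' t| ≤ 2 * c := by
  have hreg : |skorokhodReg x t - skorokhodReg x' t| ≤ c :=
    abs_runningSup_sub_le (hx.neg.sup continuousOn_const) (hx'.neg.sup continuousOn_const) ht
      fun s hs => (abs_max_sub_max_le_abs _ _ 0).trans <| by
        rw [neg_sub_neg, abs_sub_comm]; exact hc s hs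
  calc |skorokhodMap x t - skorokhodMap x' t|
      = |(x t - x' t) + (skorokhodReg x t - skorokhodReg x' t)| := by
        rw [skorokhodMap, skorokhodMap]; ring_nf
    _ ≤ c + c := (abs_add_le _ _).trans (add_le_add (hc t ⟨ht, le_rfl⟩) hreg)
    _ = 2 * c := by ring

theorem isSkorokhodSolution_skorokhodMap (hx : ContinuousOn x (Icc 0 T)) (hx0 : 0 ≤ x 0) :
    IsSkorokhodSolution T x (skorokhodMap x) (skorokhodReg x) := by
  have hneg : ContinuousOn (fun s => (x s)⁻) (Icc 0 T) := hx.neg.sup continuousOn_const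
  have le_reg : ∀ s t, s ∈ Icc 0 t → t ≤ T → (x s)⁻ ≤ skorokhodReg x t :=
    fun s t hs htT => le_runningSup (hneg.mono (Icc_subset_Icc_right htT)) hs
  refine ⟨fun t ht => ?_, fun _ _ => rfl, continuousOn_skorokhodReg hx,
    fun s hs t ht hst => runningSup_mono (hneg.mono (Icc_subset_Icc_right ht.2)) hs.1 hst, ?_, ?_⟩
  · rw [skorokhodMap]; linarith [neg_le_negPart (x t), le_reg t t ⟨ht.1, le_rfl⟩ ht.2]
  · rw [skorokhodReg, runningSup_zero, negPart_eq_zero.2 hx0]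
  · intro a b ha hab hbT hpos
    obtain ⟨s, hs, hsb⟩ :=
      exists_eq_runningSup (hneg.mono (Icc_subset_Icc_right hbT)) (ha.trans hab)
    refine le_antisymm (runningSup_mono (hneg.mono (Icc_subset_Icc_right hbT)) ha hab) ?_
    rw [skorokhodReg, ← hsb]
    rcases le_or_gt s a with hsa | has
    · exact le_reg s a ⟨hs.1, hsa⟩ (hab.trans hbT)
    -- `z s ≤ x s + (x s)⁻ = (x s)⁺`, so `z s > 0` forces `(x s)⁻ = 0`.
    have hzs : skorokhodMap x s ≤ x s + (x s)⁻ := by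
      rw [skorokhodMap, hsb]
      gcongr
      exact runningSup_mono (hneg.mono (Icc_subset_Icc_right hbT)) hs.1 hs.2
    rw [negPart_eq_zero.2 ?_]
    · exact negPart_nonneg _ |>.trans (le_reg a a ⟨ha, le_rfl⟩ (hab.trans hbT))
    by_contra! hxs
    rw [negPart_eq_neg.2 hxs.le] at hzs
    linarith [hpos s ⟨has.le, hs.2⟩]

theorem IsSkorokhodSolution.eq_of_pos_on_Ioc (hS : IsSkorokhodSolution T x z l) {a b : ℝ}
    (ha : 0 ≤ a) (hab : a ≤ b) (hbT : b ≤ T) (hpos : ∀ s ∈ Ioc a b, 0 < z s) :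
    l a = l b := by
  rcases hab.eq_or_lt with rfl | hab
  · rfl
  exact (hS.l_cont a ⟨ha, hab.le.trans hbT⟩).eq_of_forall_Ioc hab
    (fun s hs => ⟨ha.trans hs.1.le, hs.2.trans hbT⟩) fun s hs =>
      hS.l_flat s b (ha.trans hs.1.le) hs.2 hbT fun u hu => hpos u ⟨hs.1.trans_le hu.1, hu.2⟩

/-- After the last zero `τ ≤ t` of `z` the regulator is flat, and `l τ = -x τ`. -/
theorem IsSkorokhodSolution.eq_skorokhodReg (hS : IsSkorokhodSolution T x z l)
    (hx : ContinuousOn x (Icc 0 T)) (ht : t ∈ Icc 0 T) : l t = skorokhodReg x t := by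
  have hsub : Icc 0 t ⊆ Icc 0 T := Icc_subset_Icc_right ht.2
  have hneg : ContinuousOn (fun s => (x s)⁻) (Icc 0 t) :=
    (hx.mono hsub).neg.sup continuousOn_const
  refine le_antisymm ?_ (runningSup_le ht.1 fun s hs => sup_le ?_ ?_)
  · by_cases hzero : ∃ s ∈ Icc 0 t, z s = 0
    · have hz : ContinuousOn z (Icc 0 T) := (hx.add hS.l_cont).congr hS.eq_add
      have hclosed : IsClosed (Icc 0 t ∩ z ⁻¹' {0}) :=
        (hz.mono hsub).preimage_isClosed_of_isClosed isClosed_Icc isClosed_singleton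
      obtain ⟨τ, ⟨hτ, hzτ⟩, hmax⟩ :=
        (isCompact_Icc.of_isClosed_subset hclosed inter_subset_left).exists_isGreatest hzero
      have hpos : ∀ s ∈ Ioc τ t, 0 < z s := fun s hs =>
        (hS.z_nonneg s (hsub ⟨hτ.1.trans hs.1.le, hs.2⟩)).lt_of_ne' fun h0 =>
          (hs.1.trans_le (hmax ⟨⟨hτ.1.trans hs.1.le, hs.2⟩, h0⟩)).false
      calc l t = l τ := (hS.eq_of_pos_on_Ioc hτ.1 hτ.2 ht.2 hpos).symm
        _ = -x τ := by linarith [hS.eq_add τ (hsub hτ), show z τ = 0 from hzτ]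
        _ ≤ (x τ)⁻ := neg_le_negPart _
        _ ≤ skorokhodReg x t := le_runningSup hneg hτ
    · push Not at hzero
      have hpos : ∀ s ∈ Ioc 0 t, 0 < z s := fun s hs =>
        (hS.z_nonneg s (hsub (Ioc_subset_Icc_self hs))).lt_of_ne' (hzero s (Ioc_subset_Icc_self hs))
      rw [← hS.eq_of_pos_on_Ioc le_rfl ht.1 ht.2 hpos, hS.l_zero]
      exact (negPart_nonneg _).trans (le_runningSup hneg ⟨le_rfl, ht.1⟩)
  · linarith [hS.eq_add s (hsub hs), hS.z_nonneg s (hsub hs), hS.l_mono (hsub hs) ht hs.2]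
  · exact hS.l_zero ▸ hS.l_mono ⟨le_rfl, ht.1.trans ht.2⟩ ht ht.1

theorem IsSkorokhodSolution.le_two_mul {y A : ℝ → ℝ} {K : ℝ}
    (hS : IsSkorokhodSolution T (fun t => y t - A t) z l)
    (hx : ContinuousOn (fun t => y t - A t) (Icc 0 T)) (hA : MonotoneOn A (Icc 0 T))
    (hA0 : ∀ t ∈ Icc 0 T, 0 ≤ A t) (hy : ∀ t ∈ Icc 0 T, |y t| ≤ K)
    (ht : t ∈ Icc 0 T) :
    z t ≤ 2 * K := by
  have hsub : Icc 0 t ⊆ Icc 0 T := Icc_subset_Icc_right ht.2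
  have hK : 0 ≤ K := (abs_nonneg _).trans (hy t ht)
  have hl : l t ≤ K + A t := by
    rw [hS.eq_skorokhodReg hx ht]
    refine runningSup_le ht.1 fun s hs => sup_le ?_ (by linarith [hA0 t ht])
    linarith [neg_abs_le (y s), hy s (hsub hs), hA (hsub hs) ht hs.2]
  linarith [hS.eq_add t ht, le_abs_self (y t), hy t ht]

theorem IsSkorokhodSolution.mono {T' : ℝ} (hS : IsSkorokhodSolution T x z l) (hT' : T' ≤ T) :
    IsSkorokhodSolution T' x z l where
  z_nonneg t ht := hS.z_nonneg t ⟨ht.1, ht.2.trans hT'⟩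
  eq_add t ht := hS.eq_add t ⟨ht.1, ht.2.trans hT'⟩
  l_cont := hS.l_cont.mono (Icc_subset_Icc_right hT')
  l_mono := hS.l_mono.mono (Icc_subset_Icc_right hT')
  l_zero := hS.l_zero
  l_flat a b ha hab hb := hS.l_flat a b ha hab (hb.trans hT')

theorem IsSkorokhodSolution.congr (hS : IsSkorokhodSolution T x z l) (hT : 0 ≤ T)
    (hx : EqOn x x' (Icc 0 T)) (hz : EqOn z z' (Icc 0 T)) (hl : EqOn l l' (Icc 0 T)) :
    IsSkorokhodSolution T x' z' l' where
  z_nonneg t ht := hz ht ▸ hS.z_nonneg t ht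
  eq_add t ht := by rw [← hx ht, ← hz ht, ← hl ht, hS.eq_add t ht]
  l_cont := hS.l_cont.congr hl.symm
  l_mono := hS.l_mono.congr hl
  l_zero := hl ⟨le_rfl, hT⟩ ▸ hS.l_zero
  l_flat a b ha hab hb hpos := by
    rw [← hl ⟨ha, hab.trans hb⟩, ← hl ⟨ha.trans hab, hb⟩]
    exact hS.l_flat a b ha hab hb fun t ht =>
      hz ⟨ha.trans ht.1, ht.2.trans hb⟩ ▸ hpos t ht

end Skorokhod

def driftedInput (G y z : ℝ → ℝ) (t : ℝ) : ℝ := y t - ∫ s in Ioc 0 t, G (z s)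

/-- The regulator problem on `[0, T]`, with `G v` in the role of `∫₀^v h`. -/
structure IsReflectedSolutionOn (G y : ℝ → ℝ) (T : ℝ) (z l : ℝ → ℝ) : Prop where
  z_cont : ContinuousOn z (Icc 0 T)
  skorokhod : IsSkorokhodSolution T (driftedInput G y z) z l

section Drift

variable {G G' y z z' l l' : ℝ → ℝ} {T t K : ℝ}

theorem continuousOn_driftedInput (hy : ContinuousOn y (Icc 0 T))
    (hGz : ContinuousOn (fun s => G (z s)) (Icc 0 T)) :
    ContinuousOn (driftedInput G y z) (Icc 0 T) :=
  hy.sub (intervalIntegral.continuousOn_primitive (hGz.integrableOn_compact isCompact_Icc))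

theorem driftedInput_congr (h : ∀ s ∈ Ioc 0 t, G (z s) = G' (z' s)) :
    driftedInput G y z t = driftedInput G' y z' t := by
  rw [driftedInput, driftedInput, setIntegral_congr_fun measurableSet_Ioc h]

theorem IsReflectedSolutionOn.mono {T' : ℝ} (hS : IsReflectedSolutionOn G y T z l)
    (hT' : T' ≤ T) : IsReflectedSolutionOn G y T' z l :=
  ⟨hS.z_cont.mono (Icc_subset_Icc_right hT'), hS.skorokhod.mono hT'⟩

theorem IsReflectedSolutionOn.congr (hS : IsReflectedSolutionOn G y T z l) (hT : 0 ≤ T)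
    (hG : ∀ t ∈ Icc 0 T, G (z t) = G' (z' t)) (hz : EqOn z z' (Icc 0 T))
    (hl : EqOn l l' (Icc 0 T)) : IsReflectedSolutionOn G' y T z' l' :=
  ⟨hS.z_cont.congr hz.symm, hS.skorokhod.congr hT (fun _ ht => driftedInput_congr fun s hs =>
    hG s ⟨hs.1.le, hs.2.trans ht.2⟩) hz hl⟩

theorem IsReflectedSolutionOn.le_two_mul (hS : IsReflectedSolutionOn G y T z l)
    (hG : ContinuousOn G (Ici 0)) (hG0 : ∀ v, 0 ≤ v → 0 ≤ G v)
    (hy : ContinuousOn y (Icc 0 T)) (hyK : ∀ t ∈ Icc 0 T, |y t| ≤ K) (ht : t ∈ Icc 0 T) :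
    z t ≤ 2 * K := by
  have hGz : ContinuousOn (fun s => G (z s)) (Icc 0 T) :=
    hG.comp hS.z_cont fun s hs => hS.skorokhod.z_nonneg s hs
  have hGz0 : ∀ s ∈ Icc 0 T, 0 ≤ G (z s) := fun s hs => hG0 _ (hS.skorokhod.z_nonneg s hs)
  have hA : MonotoneOn (fun u => ∫ s in Ioc 0 u, G (z s)) (Icc 0 T) := fun _ _ u hu hsu =>
    setIntegral_mono_set ((hGz.integrableOn_compact isCompact_Icc).mono_set
      (Ioc_subset_Icc_self.trans (Icc_subset_Icc_right hu.2)))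
      ((ae_restrict_mem measurableSet_Ioc).mono fun s hs => hGz0 s ⟨hs.1.le, hs.2.trans hu.2⟩)
      (Ioc_subset_Ioc_right hsu).eventuallyLE
  exact hS.skorokhod.le_two_mul (continuousOn_driftedInput hy hGz) hA
    (fun u hu => setIntegral_nonneg measurableSet_Ioc fun s hs =>
      hGz0 s ⟨hs.1.le, hs.2.trans hu.2⟩) hyK ht

end Drift

section Picard

variable {T L : ℝ}

theorem integral_Ioc_mul_pow (c : ℝ) (n : ℕ) {t : ℝ} (ht : 0 ≤ t) :
    ∫ s in Ioc 0 t, c * s ^ n = c * (t ^ (n + 1) / (n + 1)) := by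
  rw [integral_const_mul, ← intervalIntegral.integral_of_le ht, integral_pow]
  simp

theorem abs_iterate_sub_le (hT : 0 ≤ T) (hL : 0 ≤ L) {Γ : C(Icc 0 T, ℝ) → C(Icc 0 T, ℝ)}
    (hΓ : ∀ a b (t : Icc 0 T), |Γ a t - Γ b t| ≤
      L * ∫ s in Ioc 0 (t : ℝ), |IccExtend hT a s - IccExtend hT b s|)
    (n : ℕ) (a b : C(Icc 0 T, ℝ)) (t : Icc 0 T) :
    |Γ^[n] a t - Γ^[n] b t| ≤ dist a b * ((L * t) ^ n / n.factorial) := by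
  induction n generalizing t with
  | zero => simpa [← Real.dist_eq] using ContinuousMap.dist_apply_le_dist t
  | succ n ih =>
    rw [Function.iterate_succ_apply', Function.iterate_succ_apply']
    refine (hΓ _ _ t).trans ?_
    have hint :
        ∫ s in Ioc 0 (t : ℝ), |IccExtend hT (Γ^[n] a) s - IccExtend hT (Γ^[n] b) s| ≤
        ∫ s in Ioc 0 (t : ℝ), dist a b * L ^ n / n.factorial * s ^ n := by
      refine setIntegral_mono_on ?_ ?_ measurableSet_Ioc fun s hs => ?_
      · exact ((Γ^[n] a).continuous.Icc_extend'.sub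
          (Γ^[n] b).continuous.Icc_extend').abs.integrableOn_Ioc
      · exact (continuous_const.mul (continuous_pow n)).integrableOn_Ioc
      · have hs' : s ∈ Icc 0 T := ⟨hs.1.le, hs.2.trans t.2.2⟩
        rw [IccExtend_of_mem _ _ hs', IccExtend_of_mem _ _ hs']
        refine (ih ⟨s, hs'⟩).trans_eq ?_
        rw [mul_pow]; ring
    calc L * ∫ s in Ioc 0 (t : ℝ), |IccExtend hT (Γ^[n] a) s - IccExtend hT (Γ^[n] b) s|
        ≤ L * ∫ s in Ioc 0 (t : ℝ), dist a b * L ^ n / n.factorial * s ^ n := by gcongr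
      _ = dist a b * ((L * t) ^ (n + 1) / (n + 1).factorial) := by
        rw [integral_Ioc_mul_pow _ _ t.2.1, Nat.factorial_succ]
        push_cast
        field_simp
        ring

/-- A Volterra-type estimate makes some iterate of `Γ` a contraction. -/
theorem existsUnique_fixedPoint_of_abs_sub_le_integral (hT : 0 ≤ T) (hL : 0 ≤ L)
    {Γ : C(Icc 0 T, ℝ) → C(Icc 0 T, ℝ)}
    (hΓ : ∀ a b (t : Icc 0 T), |Γ a t - Γ b t| ≤
      L * ∫ s in Ioc 0 (t : ℝ), |IccExtend hT a s - IccExtend hT b s|) :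
    ∃! z, Γ z = z := by
  obtain ⟨n, hn⟩ : ∃ n : ℕ, (L * T) ^ n / n.factorial < 1 :=
    ((FloorSemiring.tendsto_pow_div_factorial_atTop (L * T)).eventually
      (gt_mem_nhds one_pos)).exists
  have hq : 0 ≤ (L * T) ^ n / n.factorial := by positivity
  have hcontr : ContractingWith (⟨_, hq⟩ : NNReal) Γ^[n] := by
    refine ⟨hn, LipschitzWith.of_dist_le_mul fun a b =>
      (ContinuousMap.dist_le (by positivity)).2 fun t => ?_⟩
    change |_ - _| ≤ (L * T) ^ n / n.factorial * dist a b
    rw [mul_comm]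
    refine (abs_iterate_sub_le hT hL hΓ n a b t).trans (mul_le_mul_of_nonneg_left ?_ dist_nonneg)
    have ht := t.2
    gcongr
    · exact mul_nonneg hL ht.1
    · exact ht.2
  exact ⟨_, hcontr.isFixedPt_fixedPoint_iterate,
    fun z hz => hcontr.fixedPoint_unique (Function.IsFixedPt.iterate hz n)⟩

variable {G y z z' l l' : ℝ → ℝ} {K : NNReal}

def picardMap (hT : 0 ≤ T) (hG : Continuous G) (hy : ContinuousOn y (Icc 0 T))
    (z : C(Icc 0 T, ℝ)) : C(Icc 0 T, ℝ) where
  toFun t := skorokhodMap (driftedInput G y (IccExtend hT z)) t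
  continuous_toFun := (continuousOn_skorokhodMap (continuousOn_driftedInput hy
    (hG.comp z.continuous.Icc_extend').continuousOn)).domRestrict

theorem abs_driftedInput_sub_le (hG : LipschitzWith K G) (hz : Continuous z)
    (hz' : Continuous z') {s t : ℝ} (hst : s ≤ t) :
    |driftedInput G y z s - driftedInput G y z' s| ≤ K * ∫ u in Ioc 0 t, |z u - z' u| := by
  have hGz : Continuous fun u => G (z u) := hG.continuous.comp hz
  have hGz' : Continuous fun u => G (z' u) := hG.continuous.comp hz'
  have hd : Continuous fun u => |z u - z' u| := (hz.sub hz').abs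
  calc |driftedInput G y z s - driftedInput G y z' s|
      = |∫ u in Ioc 0 s, (G (z' u) - G (z u))| := by
        rw [driftedInput, driftedInput, integral_sub hGz'.integrableOn_Ioc hGz.integrableOn_Ioc]
        ring_nf
    _ ≤ ∫ u in Ioc 0 s, |G (z' u) - G (z u)| := abs_integral_le_integral_abs
    _ ≤ ∫ u in Ioc 0 s, K * |z u - z' u| := by
        refine setIntegral_mono_on (hGz'.sub hGz).abs.integrableOn_Ioc
          (continuous_const.mul hd).integrableOn_Ioc measurableSet_Ioc fun u _ => ?_
        simpa [Real.dist_eq, abs_sub_comm] using hG.dist_le_mul (z' u) (z u)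
    _ = K * ∫ u in Ioc 0 s, |z u - z' u| := integral_const_mul _ _
    _ ≤ K * ∫ u in Ioc 0 t, |z u - z' u| := by
        refine mul_le_mul_of_nonneg_left (setIntegral_mono_set hd.integrableOn_Ioc ?_
          (Ioc_subset_Ioc_right hst).eventuallyLE) K.2
        exact Filter.Eventually.of_forall fun u => abs_nonneg _

theorem abs_picardMap_sub_le (hT : 0 ≤ T) (hG : LipschitzWith K G)
    (hy : ContinuousOn y (Icc 0 T)) (a b : C(Icc 0 T, ℝ)) (t : Icc 0 T) :
    |picardMap hT hG.continuous hy a t - picardMap hT hG.continuous hy b t| ≤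
      2 * K * ∫ s in Ioc 0 (t : ℝ), |IccExtend hT a s - IccExtend hT b s| := by
  have hx : ∀ c : C(Icc 0 T, ℝ), ContinuousOn (driftedInput G y (IccExtend hT c)) (Icc 0 t) :=
    fun c => (continuousOn_driftedInput hy (hG.continuous.comp
      c.continuous.Icc_extend').continuousOn).mono (Icc_subset_Icc_right t.2.2)
  rw [mul_assoc]
  exact abs_skorokhodMap_sub_le (hx a) (hx b) t.2.1 fun s hs =>
    abs_driftedInput_sub_le hG a.continuous.Icc_extend' b.continuous.Icc_extend' hs.2

theorem isReflectedSolutionOn_of_isFixedPt (hT : 0 ≤ T) (hG : Continuous G)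
    (hy : ContinuousOn y (Icc 0 T)) (hy0 : 0 ≤ y 0) {z : C(Icc 0 T, ℝ)}
    (hz : picardMap hT hG hy z = z) :
    IsReflectedSolutionOn G y T (IccExtend hT z)
      (skorokhodReg (driftedInput G y (IccExtend hT z))) := by
  have hx := continuousOn_driftedInput (G := G) (z := IccExtend hT z) hy
    (hG.comp z.continuous.Icc_extend').continuousOn
  refine ⟨z.continuous.Icc_extend'.continuousOn,
    (isSkorokhodSolution_skorokhodMap hx (by simpa [driftedInput] using hy0)).congr hT
      (fun _ _ => rfl) (fun t ht => ?_) (fun _ _ => rfl)⟩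
  rw [IccExtend_of_mem _ _ ht]
  exact DFunLike.congr_fun hz ⟨t, ht⟩

theorem IsReflectedSolutionOn.picardMap_eq (hT : 0 ≤ T) (hG : Continuous G)
    (hy : ContinuousOn y (Icc 0 T)) (hS : IsReflectedSolutionOn G y T z l) :
    picardMap hT hG hy ⟨(Icc 0 T).domRestrict z, hS.z_cont.domRestrict⟩ =
      ⟨(Icc 0 T).domRestrict z, hS.z_cont.domRestrict⟩ := by
  ext ⟨t, ht⟩
  have hx : EqOn (driftedInput G y (IccExtend hT ((Icc 0 T).domRestrict z))) (driftedInput G y z)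
      (Icc 0 t) := fun s hs => driftedInput_congr fun u hu => by
    rw [IccExtend_of_mem _ _ ⟨hu.1.le, hu.2.trans (hs.2.trans ht.2)⟩, domRestrict_apply]
  have hxc := continuousOn_driftedInput (G := G) (z := z) hy (hG.comp_continuousOn hS.z_cont)
  change skorokhodMap (driftedInput G y (IccExtend hT ((Icc 0 T).domRestrict z))) t = z t
  rw [skorokhodMap_congr hx ht.1, skorokhodMap,
    ← hS.skorokhod.eq_skorokhodReg hxc ht, ← hS.skorokhod.eq_add t ht]

theorem exists_isReflectedSolutionOn_of_lipschitzWith (hT : 0 ≤ T) (hG : LipschitzWith K G)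
    (hy : ContinuousOn y (Icc 0 T)) (hy0 : 0 ≤ y 0) : ∃ z l, IsReflectedSolutionOn G y T z l :=
  let ⟨_, hz, _⟩ := existsUnique_fixedPoint_of_abs_sub_le_integral hT (by positivity)
    (abs_picardMap_sub_le hT hG hy)
  ⟨_, _, isReflectedSolutionOn_of_isFixedPt hT hG.continuous hy hy0 hz⟩

theorem IsReflectedSolutionOn.eqOn_of_lipschitzWith (hT : 0 ≤ T) (hG : LipschitzWith K G)
    (hy : ContinuousOn y (Icc 0 T)) (hS : IsReflectedSolutionOn G y T z l)
    (hS' : IsReflectedSolutionOn G y T z' l') : EqOn z z' (Icc 0 T) ∧ EqOn l l' (Icc 0 T) := by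
  have hzz' := (existsUnique_fixedPoint_of_abs_sub_le_integral hT (by positivity)
    (abs_picardMap_sub_le hT hG hy)).unique (hS.picardMap_eq hT hG.continuous hy)
    (hS'.picardMap_eq hT hG.continuous hy)
  have hz : EqOn z z' (Icc 0 T) := fun t ht => DFunLike.congr_fun hzz' ⟨t, ht⟩
  refine ⟨hz, fun t ht => ?_⟩
  have hx : driftedInput G y z t = driftedInput G y z' t :=
    driftedInput_congr fun s hs => by rw [hz ⟨hs.1.le, hs.2.trans ht.2⟩]
  linarith [hS.skorokhod.eq_add t ht, hS'.skorokhod.eq_add t ht, hz ht]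

end Picard

section LocallyLipschitz

variable {G y z z' l l' : ℝ → ℝ} {T : ℝ}

theorem lipschitzWith_comp_projIcc {M : ℝ} (hM : 0 ≤ M) {K : NNReal}
    (hG : LipschitzOnWith K G (Icc 0 M)) : LipschitzWith K fun v => G (projIcc 0 M hM v) := by
  rw [← mul_one K]
  exact hG.to_restrict.comp (LipschitzWith.projIcc hM)

/-- Solutions stay below `M = 2 sup |y|`, so cutting the drift off above `M` makes it globally
Lipschitz without changing the solutions. -/
theorem exists_lipschitzWith_iff_isReflectedSolutionOn
    (hG : ∀ M, ∃ K, LipschitzOnWith K G (Icc 0 M)) (hG0 : ∀ v, 0 ≤ v → 0 ≤ G v)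
    (hy : ContinuousOn y (Icc 0 T)) (hT : 0 ≤ T) :
    ∃ (G' : ℝ → ℝ) (K : NNReal), LipschitzWith K G' ∧
      ∀ z l, IsReflectedSolutionOn G' y T z l ↔ IsReflectedSolutionOn G y T z l := by
  obtain ⟨B, hB⟩ := isCompact_Icc.exists_bound_of_continuousOn hy
  have hM : 0 ≤ 2 * B := by linarith [(norm_nonneg _).trans (hB 0 ⟨le_rfl, hT⟩)]
  obtain ⟨K, hK⟩ := hG (2 * B)
  set G' : ℝ → ℝ := fun v => G (projIcc 0 (2 * B) hM v)
  have hG' : LipschitzWith K G' := lipschitzWith_comp_projIcc hM hK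
  have hG'0 : ∀ v, 0 ≤ v → 0 ≤ G' v := fun v _ => hG0 _ (projIcc 0 _ hM v).2.1
  have hGc : ContinuousOn G (Ici 0) :=
    continuousOn_Ici_of_forall_Icc fun M _ => (hG M).elim fun _ h => h.continuousOn
  have hG'G : ∀ {G'' z l}, IsReflectedSolutionOn G'' y T z l → (∀ t ∈ Icc 0 T, z t ≤ 2 * B) →
      ∀ t ∈ Icc 0 T, G' (z t) = G (z t) := fun hS hz t ht => by
    simp only [G', projIcc_of_mem hM ⟨hS.skorokhod.z_nonneg t ht, hz t ht⟩]
  refine ⟨G', K, hG', fun z l => ⟨fun hS => ?_, fun hS => ?_⟩⟩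
  · have hz t (ht : t ∈ Icc 0 T) := hS.le_two_mul hG'.continuous.continuousOn hG'0 hy hB ht
    exact hS.congr hT (hG'G hS hz) (fun _ _ => rfl) (fun _ _ => rfl)
  · have hz t (ht : t ∈ Icc 0 T) := hS.le_two_mul hGc hG0 hy hB ht
    exact hS.congr hT (fun t ht => (hG'G hS hz t ht).symm) (fun _ _ => rfl) (fun _ _ => rfl)

theorem exists_isReflectedSolutionOn (hG : ∀ M, ∃ K, LipschitzOnWith K G (Icc 0 M))
    (hG0 : ∀ v, 0 ≤ v → 0 ≤ G v) (hy : ContinuousOn y (Icc 0 T)) (hy0 : 0 ≤ y 0)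
    (hT : 0 ≤ T) :
    ∃ z l, IsReflectedSolutionOn G y T z l :=
  let ⟨_, _, hG', hiff⟩ := exists_lipschitzWith_iff_isReflectedSolutionOn hG hG0 hy hT
  let ⟨z, l, hS⟩ := exists_isReflectedSolutionOn_of_lipschitzWith hT hG' hy hy0
  ⟨z, l, (hiff z l).1 hS⟩

theorem IsReflectedSolutionOn.eqOn (hG : ∀ M, ∃ K, LipschitzOnWith K G (Icc 0 M))
    (hG0 : ∀ v, 0 ≤ v → 0 ≤ G v) (hy : ContinuousOn y (Icc 0 T)) (hT : 0 ≤ T)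
    (hS : IsReflectedSolutionOn G y T z l) (hS' : IsReflectedSolutionOn G y T z' l') :
    EqOn z z' (Icc 0 T) ∧ EqOn l l' (Icc 0 T) :=
  let ⟨_, _, hG', hiff⟩ := exists_lipschitzWith_iff_isReflectedSolutionOn hG hG0 hy hT
  ((hiff z l).2 hS).eqOn_of_lipschitzWith hT hG' hy ((hiff z' l').2 hS')

/-- By uniqueness, the solutions on the intervals `[0, T]` are restrictions of one another. -/
theorem exists_forall_isReflectedSolutionOn (hG : ∀ M, ∃ K, LipschitzOnWith K G (Icc 0 M))
    (hG0 : ∀ v, 0 ≤ v → 0 ≤ G v) (hy : ContinuousOn y (Ici 0)) (hy0 : 0 ≤ y 0) :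
    ∃ z l, ∀ T, 0 ≤ T → IsReflectedSolutionOn G y T z l := by
  have hyT : ∀ T, ContinuousOn y (Icc 0 T) := fun T => hy.mono Icc_subset_Ici_self
  choose Z L hZL using fun T : ℝ =>
    let ⟨z, l, hS⟩ := exists_isReflectedSolutionOn hG hG0 (hyT _) hy0 (le_max_left 0 T)
    (⟨z, l, hS.mono (le_max_right 0 T)⟩ : ∃ z l, IsReflectedSolutionOn G y T z l)
  have hagree : ∀ T t, t ∈ Icc 0 T → Z T t = Z t t ∧ L T t = L t t := fun T t ht =>
    (((hZL T).mono ht.2).eqOn hG hG0 (hyT t) ht.1 (hZL t)).imp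
      (· ⟨ht.1, le_rfl⟩) (· ⟨ht.1, le_rfl⟩)
  exact ⟨fun t => Z t t, fun t => L t t, fun T hT =>
    (hZL T).congr hT (fun t ht => by rw [(hagree T t ht).1]) (fun t ht => (hagree T t ht).1)
      (fun t ht => (hagree T t ht).2)⟩

end LocallyLipschitz

theorem lipschitzOnWith_integral_Ioc {h : ℝ → ℝ} (hh : ContinuousOn h (Ici 0)) (M : ℝ) :
    ∃ K, LipschitzOnWith K (fun v => ∫ u in Ioc 0 v, h u) (Icc 0 M) := by
  obtain ⟨C, hC⟩ := isCompact_Icc.exists_bound_of_continuousOn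
    (hh.mono (Icc_subset_Ici_self : Icc 0 M ⊆ Ici 0))
  have hint : ∀ a ∈ Icc 0 M, IntervalIntegrable h volume 0 a := fun a ha =>
    (hh.mono fun _ hu =>
      (uIcc_subset_Icc (left_mem_Icc.2 ha.1) (right_mem_Icc.2 ha.1) hu).1).intervalIntegrable
  refine ⟨C.toNNReal, LipschitzOnWith.of_dist_le_mul fun v hv w hw => ?_⟩
  rw [Real.dist_eq, Real.dist_eq, ← intervalIntegral.integral_of_le hv.1,
    ← intervalIntegral.integral_of_le hw.1,
    intervalIntegral.integral_interval_sub_left (hint v hv) (hint w hw)]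
  exact intervalIntegral.norm_integral_le_of_norm_le_const fun u hu =>
    (hC u (uIcc_subset_Icc hw hv (uIoc_subset_uIcc hu))).trans (Real.le_coe_toNNReal C)

theorem isRegulatorSolution_iff {h y z l : ℝ → ℝ} :
    IsRegulatorSolution h y z l ↔
      ∀ T, 0 ≤ T → IsReflectedSolutionOn (fun v => ∫ u in Ioc 0 v, h u) y T z l where
  mp hS _ _ :=
    ⟨hS.z_cont.mono Icc_subset_Ici_self,
      ⟨fun t ht => hS.z_nonneg t ht.1, fun t ht => hS.eqn t ht.1,
        hS.l_cont.mono Icc_subset_Ici_self, hS.l_mono.mono Icc_subset_Ici_self, hS.l_zero,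
        fun a b ha hab _ => hS.l_flat a b ha hab⟩⟩
  mpr hS :=
    { z_cont := continuousOn_Ici_of_forall_Icc fun T hT => (hS T hT).z_cont
      l_cont := continuousOn_Ici_of_forall_Icc fun T hT => (hS T hT).skorokhod.l_cont
      z_nonneg := fun t ht => (hS t ht).skorokhod.z_nonneg t ⟨ht, le_rfl⟩
      eqn := fun t ht => (hS t ht).skorokhod.eq_add t ⟨ht, le_rfl⟩
      l_mono := fun _ ha b hb hab => (hS b hb).skorokhod.l_mono ⟨ha, hab⟩ ⟨hb, le_rfl⟩ hab
      l_zero := (hS 0 le_rfl).skorokhod.l_zero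
      l_flat := fun a b ha hab => (hS b (ha.trans hab)).skorokhod.l_flat a b ha hab le_rfl }

/-- existence and uniqueness of the solution of the one-sided nonlinear
generalized regulator problem for a continuous hazard function `h` and continuous
input `y` with `y(0) ≥ 0` (uniqueness as functions on `[0,∞)`). -/
theorem regulator_exists_unique (h y : ℝ → ℝ)
    (h_cont : ContinuousOn h (Set.Ici 0))
    (h_nonneg : ∀ u, 0 ≤ u → 0 ≤ h u)
    (y_cont : ContinuousOn y (Set.Ici 0))
    (hy0 : 0 ≤ y 0) :
    ∃ z l : ℝ → ℝ, IsRegulatorSolution h y z l ∧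
      ∀ z' l' : ℝ → ℝ, IsRegulatorSolution h y z' l' →
        ∀ t, 0 ≤ t → z' t = z t ∧ l' t = l t := by
  have hG := lipschitzOnWith_integral_Ioc h_cont
  have hG0 : ∀ v, 0 ≤ v → 0 ≤ ∫ u in Ioc 0 v, h u := fun _ _ =>
    setIntegral_nonneg measurableSet_Ioc fun u hu => h_nonneg u hu.1.le
  obtain ⟨z, l, hzl⟩ := exists_forall_isReflectedSolutionOn hG hG0 y_cont hy0
  refine ⟨z, l, isRegulatorSolution_iff.2 hzl, fun z' l' hS' t ht => ?_⟩
  exact (((isRegulatorSolution_iff.1 hS') t ht).eqOn hG hG0 (y_cont.mono Icc_subset_Ici_self) ht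
    (hzl t ht)).imp (· ⟨ht, le_rfl⟩) (· ⟨ht, le_rfl⟩)
end
end
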